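/- arXiv:2603.27903 — 3 statements merged into one kernel-verified Lean document; each statement's English description precedes it below -/
import Mathlib

section
/- Let n ≥ 2 and let M be a symmetric linear endomorphism of the Euclidean space ℝⁿ with eigenvalues λ_1 < ⋯ < λ_n and orthonormal eigenvectors e_1, …, e_n. Let 1 ≤ k ≤ n − 1 and let c ∈ ℝ satisfy λ_k < c < λ_{k+1}. Then the sublevel set {x : ‖x‖ = 1 ∧ ⟪x, M x⟫ ≤ c}, with its subspace topology, is homotopy equivalent to the unit sphere S^{k−1} = {y ∈ ℝᵏ : ‖y‖ = 1} in the Euclidean space ℝᵏ. -/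
open RealInnerProductSpace

/-! In an orthonormal eigenbasis, `⟪x, M x⟫ - c ‖x‖² = ∑ (λᵢ - c) xᵢ²`, which is negative
definite on the span `V` of the eigenvectors with `λᵢ < c` and positive definite on `Vᗮ`.
So for `x` in the sublevel set, shrinking the `Vᗮ`-component of `x` never leaves the cone
`⟪y, M y⟫ ≤ c ‖y‖²` and never reaches `0`; normalising the straight-line homotopy from `x` to its
orthogonal projection onto `V` deformation retracts the sublevel set onto the unit sphere of
`V ≃ ℝᵏ`. -/

theorem unitInterval.abs_coe_le_one (t : unitInterval) : |(t : ℝ)| ≤ 1 :=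
  (abs_of_nonneg t.2.1).trans_le t.2.2

section Sublevel

variable {E : Type*} [NormedAddCommGroup E] [InnerProductSpace ℝ E]
  {T : E →ₗ[ℝ] E} {V : Submodule ℝ E} {c : ℝ}

theorem inner_map_self_smul (T : E →ₗ[ℝ] E) (r : ℝ) (y : E) :
    ⟪r • y, T (r • y)⟫ = r ^ 2 * ⟪y, T y⟫ := by
  rw [map_smul, real_inner_smul_left, real_inner_smul_right]
  ring

theorem inner_map_self_add_of_mem_orthogonal (hT : T.IsSymmetric) (hV : ∀ v ∈ V, T v ∈ V)
    {v w : E} (hv : v ∈ V) (hw : w ∈ Vᗮ) :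
    ⟪v + w, T (v + w)⟫ = ⟪v, T v⟫ + ⟪w, T w⟫ := by
  have hvw : ⟪v, T w⟫ = 0 := by
    rw [← hT]
    exact Submodule.inner_right_of_mem_orthogonal (hV v hv) hw
  have hwv : ⟪w, T v⟫ = 0 := Submodule.inner_left_of_mem_orthogonal (hV v hv) hw
  rw [map_add, inner_add_left, inner_add_right, inner_add_right, hvw, hwv]
  ring

theorem norm_smul_inv_norm_mem_sublevel {y : E} (hy : y ≠ 0)
    (h : ⟪y, T y⟫ ≤ c * ‖y‖ ^ 2) :
    ‖‖y‖⁻¹ • y‖ = 1 ∧ ⟪‖y‖⁻¹ • y, T (‖y‖⁻¹ • y)⟫ ≤ c := by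
  refine ⟨norm_smul_inv_norm hy, ?_⟩
  rw [inner_map_self_smul]
  calc ‖y‖⁻¹ ^ 2 * ⟪y, T y⟫ ≤ ‖y‖⁻¹ ^ 2 * (c * ‖y‖ ^ 2) := by gcongr
    _ = c := by field_simp

theorem inner_map_self_add_smul_le (hT : T.IsSymmetric) (hV : ∀ v ∈ V, T v ∈ V)
    (hhigh : ∀ w ∈ Vᗮ, c * ‖w‖ ^ 2 ≤ ⟪w, T w⟫) {v w : E} (hv : v ∈ V) (hw : w ∈ Vᗮ)
    (h : ⟪v + w, T (v + w)⟫ ≤ c * ‖v + w‖ ^ 2) {t : ℝ} (ht : |t| ≤ 1) :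
    ⟪v + t • w, T (v + t • w)⟫ ≤ c * ‖v + t • w‖ ^ 2 := by
  have htw : t • w ∈ Vᗮ := Vᗮ.smul_mem t hw
  have hnorm : ∀ u ∈ Vᗮ, ‖v + u‖ ^ 2 = ‖v‖ ^ 2 + ‖u‖ ^ 2 := fun u hu => by
    simpa only [sq] using
      norm_add_sq_eq_norm_sq_add_norm_sq_real (Submodule.inner_right_of_mem_orthogonal hv hu)
  rw [inner_map_self_add_of_mem_orthogonal hT hV hv hw, hnorm w hw] at h
  rw [inner_map_self_add_of_mem_orthogonal hT hV hv htw, hnorm _ htw, inner_map_self_smul,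
    norm_smul, mul_pow, Real.norm_eq_abs, sq_abs]
  have ht2 : t ^ 2 ≤ 1 := (sq_le_one_iff_abs_le_one t).2 ht
  nlinarith [hhigh w hw, sq_nonneg t]

theorem add_ne_zero_of_mem_orthogonal {v w : E} (hv : v ∈ V) (hw : w ∈ Vᗮ) (hv0 : v ≠ 0) :
    v + w ≠ 0 := fun h0 => hv0 <| Submodule.disjoint_def.1 V.orthogonal_disjoint v hv <| by
  simpa [eq_neg_of_add_eq_zero_left h0] using Vᗮ.neg_mem hw

variable [V.HasOrthogonalProjection]

theorem orthogonalProjectionOnto_ne_zero_of_mem_sublevel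
    (hhigh : ∀ w ∈ Vᗮ, w ≠ 0 → c * ‖w‖ ^ 2 < ⟪w, T w⟫) {x : E}
    (hx : ‖x‖ = 1 ∧ ⟪x, T x⟫ ≤ c) : V.orthogonalProjectionOnto x ≠ 0 := by
  rw [Ne, V.orthogonalProjectionOnto_eq_zero_iff]
  intro hxV
  have hx0 : x ≠ 0 := norm_ne_zero_iff.1 (by simp [hx.1])
  exact (hhigh x hxV hx0).not_ge (by simpa [hx.1] using hx.2)

theorem starProjection_add_smul_sub_ne_zero_and_le (hT : T.IsSymmetric) (hV : ∀ v ∈ V, T v ∈ V)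
    (hhigh : ∀ w ∈ Vᗮ, w ≠ 0 → c * ‖w‖ ^ 2 < ⟪w, T w⟫) {x : E}
    (hx : ‖x‖ = 1 ∧ ⟪x, T x⟫ ≤ c) {t : ℝ} (ht : |t| ≤ 1) :
    V.starProjection x + t • (x - V.starProjection x) ≠ 0 ∧
      ⟪V.starProjection x + t • (x - V.starProjection x),
        T (V.starProjection x + t • (x - V.starProjection x))⟫ ≤
      c * ‖V.starProjection x + t • (x - V.starProjection x)‖ ^ 2 := by
  have hPx : V.starProjection x ∈ V := V.starProjection_apply_mem x
  have hx' : x - V.starProjection x ∈ Vᗮ := V.sub_starProjection_mem_orthogonal x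
  refine ⟨add_ne_zero_of_mem_orthogonal hPx (Vᗮ.smul_mem t hx') ?_, ?_⟩
  · exact fun h0 => orthogonalProjectionOnto_ne_zero_of_mem_sublevel hhigh hx (Subtype.ext h0)
  · refine inner_map_self_add_smul_le hT hV (fun w hw => ?_) hPx hx' ?_ ht
    · rcases eq_or_ne w 0 with rfl | hw0
      · simp
      · exact (hhigh w hw hw0).le
    · simpa [hx.1] using hx.2

variable (V) in
noncomputable def sublevelToSphere (hhigh : ∀ w ∈ Vᗮ, w ≠ 0 → c * ‖w‖ ^ 2 < ⟪w, T w⟫) :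
    C({x : E // ‖x‖ = 1 ∧ ⟪x, T x⟫ ≤ c}, Metric.sphere (0 : V) 1) where
  toFun x := ⟨‖V.orthogonalProjectionOnto x‖⁻¹ • V.orthogonalProjectionOnto x,
    mem_sphere_zero_iff_norm.2 <|
      norm_smul_inv_norm (orthogonalProjectionOnto_ne_zero_of_mem_sublevel hhigh x.2)⟩
  continuous_toFun := by
    have hP : Continuous fun x : {x : E // ‖x‖ = 1 ∧ ⟪x, T x⟫ ≤ c} =>
        V.orthogonalProjectionOnto x := by fun_prop
    exact ((hP.norm.inv₀ fun x => norm_ne_zero_iff.2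
      (orthogonalProjectionOnto_ne_zero_of_mem_sublevel hhigh x.2)).smul hP).subtype_mk _

noncomputable def sphereToSublevel (hlow : ∀ v ∈ V, ⟪v, T v⟫ ≤ c * ‖v‖ ^ 2) :
    C(Metric.sphere (0 : V) 1, {x : E // ‖x‖ = 1 ∧ ⟪x, T x⟫ ≤ c}) where
  toFun v := ⟨v, by
    have hv : ‖(v : E)‖ = 1 := mem_sphere_zero_iff_norm.1 v.2
    exact ⟨hv, by simpa [hv] using hlow v v.1.2⟩⟩

theorem sublevelToSphere_comp_sphereToSublevel (hlow : ∀ v ∈ V, ⟪v, T v⟫ ≤ c * ‖v‖ ^ 2)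
    (hhigh : ∀ w ∈ Vᗮ, w ≠ 0 → c * ‖w‖ ^ 2 < ⟪w, T w⟫) :
    (sublevelToSphere V hhigh).comp (sphereToSublevel hlow) = ContinuousMap.id _ := by
  ext v
  have hv : ‖(v : E)‖ = 1 := mem_sphere_zero_iff_norm.1 v.2
  simp [sublevelToSphere, sphereToSublevel, hv]

noncomputable def sublevelRetractionHomotopy (hT : T.IsSymmetric) (hV : ∀ v ∈ V, T v ∈ V)
    (hlow : ∀ v ∈ V, ⟪v, T v⟫ ≤ c * ‖v‖ ^ 2)
    (hhigh : ∀ w ∈ Vᗮ, w ≠ 0 → c * ‖w‖ ^ 2 < ⟪w, T w⟫) :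
    ((sphereToSublevel hlow).comp (sublevelToSphere V hhigh)).Homotopy (ContinuousMap.id _) where
  toFun p :=
    let y := V.starProjection p.2 + (p.1 : ℝ) • ((p.2 : E) - V.starProjection p.2)
    have hy := starProjection_add_smul_sub_ne_zero_and_le hT hV hhigh p.2.2
      (unitInterval.abs_coe_le_one p.1)
    ⟨‖y‖⁻¹ • y, norm_smul_inv_norm_mem_sublevel hy.1 hy.2⟩
  continuous_toFun := by
    have hy : Continuous fun p : unitInterval × {x : E // ‖x‖ = 1 ∧ ⟪x, T x⟫ ≤ c} =>
        V.starProjection p.2 + (p.1 : ℝ) • ((p.2 : E) - V.starProjection p.2) := by fun_prop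
    refine ((hy.norm.inv₀ fun p => norm_ne_zero_iff.2 ?_).smul hy).subtype_mk _
    exact (starProjection_add_smul_sub_ne_zero_and_le hT hV hhigh p.2.2
      (unitInterval.abs_coe_le_one p.1)).1
  map_zero_left x := by
    ext
    simp [sublevelToSphere, sphereToSublevel]
  map_one_left x := by
    ext
    simp [x.2.1]

noncomputable def sublevelHomotopyEquivSphere (hT : T.IsSymmetric) (hV : ∀ v ∈ V, T v ∈ V)
    (hlow : ∀ v ∈ V, ⟪v, T v⟫ ≤ c * ‖v‖ ^ 2)
    (hhigh : ∀ w ∈ Vᗮ, w ≠ 0 → c * ‖w‖ ^ 2 < ⟪w, T w⟫) :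
    ContinuousMap.HomotopyEquiv {x : E // ‖x‖ = 1 ∧ ⟪x, T x⟫ ≤ c} (Metric.sphere (0 : V) 1) where
  toFun := sublevelToSphere V hhigh
  invFun := sphereToSublevel hlow
  left_inv := ⟨sublevelRetractionHomotopy hT hV hlow hhigh⟩
  right_inv := by
    rw [sublevelToSphere_comp_sphereToSublevel]

end Sublevel

noncomputable def LinearIsometryEquiv.unitSphereHomeomorph {F G : Type*}
    [NormedAddCommGroup F] [NormedSpace ℝ F] [NormedAddCommGroup G]
    [NormedSpace ℝ G] (L : F ≃ₗᵢ[ℝ] G) :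
    Metric.sphere (0 : F) 1 ≃ₜ Metric.sphere (0 : G) 1 :=
  L.toHomeomorph.subtype fun x => by simp

section Eigenbasis

variable {ι κ E : Type*} [NormedAddCommGroup E] [InnerProductSpace ℝ E]
  {T : E →ₗ[ℝ] E} {lam : ι → ℝ} {f : κ → ι}

theorem map_mem_span_eigenvectors {v : ι → E} (hv : ∀ i, T (v i) = lam i • v i) {x : E}
    (hx : x ∈ Submodule.span ℝ (Set.range (v ∘ f))) :
    T x ∈ Submodule.span ℝ (Set.range (v ∘ f)) := by
  refine (Submodule.span_le (p := (Submodule.span ℝ (Set.range (v ∘ f))).comap T)).2 ?_ hx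
  rintro _ ⟨j, rfl⟩
  simpa [hv] using
    Submodule.smul_mem _ (lam (f j)) (Submodule.subset_span (Set.mem_range_self (f := v ∘ f) j))

theorem Orthonormal.inner_eq_zero_of_mem_span_of_notMem_range {v : ι → E} (hv : Orthonormal ℝ v)
    {i : ι} (hi : i ∉ Set.range f) {x : E} (hx : x ∈ Submodule.span ℝ (Set.range (v ∘ f))) :
    ⟪v i, x⟫ = 0 := by
  refine Submodule.mem_orthogonal_singleton_iff_inner_right.1
    ((Submodule.span_le (p := (ℝ ∙ v i)ᗮ)).2 ?_ hx)
  rintro _ ⟨j, rfl⟩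
  exact Submodule.mem_orthogonal_singleton_iff_inner_right.2 (hv.2 fun h => hi ⟨j, h.symm⟩)

variable [Fintype ι] (b : OrthonormalBasis ι ℝ E)

theorem inner_map_self_sub_eq_sum (hT : T.IsSymmetric) (hb : ∀ i, T (b i) = lam i • b i)
    (c : ℝ) (x : E) :
    ⟪x, T x⟫ - c * ‖x‖ ^ 2 = ∑ i, (lam i - c) * ⟪b i, x⟫ ^ 2 := by
  have hTx : ∀ i, ⟪x, b i⟫ * ⟪b i, T x⟫ = lam i * ⟪b i, x⟫ ^ 2 := fun i => by
    rw [← hT, hb, real_inner_smul_left, real_inner_comm]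
    ring
  have hx : ∀ i, ⟪x, b i⟫ * ⟪b i, x⟫ = ⟪b i, x⟫ ^ 2 := fun i => by
    rw [real_inner_comm, sq]
  rw [← b.sum_inner_mul_inner x (T x), ← real_inner_self_eq_norm_sq,
    ← b.sum_inner_mul_inner x x, Finset.mul_sum, ← Finset.sum_sub_distrib]
  simp only [hTx, hx]
  exact Finset.sum_congr rfl fun i _ => by ring

theorem inner_map_self_le_of_mem_span (hT : T.IsSymmetric) (hb : ∀ i, T (b i) = lam i • b i)
    {c : ℝ} (hlow : ∀ j, lam (f j) ≤ c) {v : E}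
    (hv : v ∈ Submodule.span ℝ (Set.range (b ∘ f))) : ⟪v, T v⟫ ≤ c * ‖v‖ ^ 2 := by
  rw [← sub_nonpos, inner_map_self_sub_eq_sum b hT hb]
  refine Finset.sum_nonpos fun i _ => ?_
  by_cases hi : i ∈ Set.range f
  · obtain ⟨j, rfl⟩ := hi
    exact mul_nonpos_of_nonpos_of_nonneg (sub_nonpos.2 (hlow j)) (sq_nonneg _)
  · simp [b.orthonormal.inner_eq_zero_of_mem_span_of_notMem_range hi hv]

theorem lt_inner_map_self_of_mem_orthogonal_span (hT : T.IsSymmetric)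
    (hb : ∀ i, T (b i) = lam i • b i) {c : ℝ} (hhigh : ∀ i ∉ Set.range f, c < lam i) {w : E}
    (hw : w ∈ (Submodule.span ℝ (Set.range (b ∘ f)))ᗮ) (hw0 : w ≠ 0) :
    c * ‖w‖ ^ 2 < ⟪w, T w⟫ := by
  have hcoord : ∀ j, ⟪b (f j), w⟫ = 0 := fun j =>
    Submodule.inner_right_of_mem_orthogonal
      (Submodule.subset_span (Set.mem_range_self (f := b ∘ f) j)) hw
  obtain ⟨i, hi⟩ : ∃ i, ⟪b i, w⟫ ≠ 0 := by
    by_contra! h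
    exact hw0 (by rw [← b.sum_repr' w]; simp [h])
  have hif : i ∉ Set.range f := by
    rintro ⟨j, rfl⟩
    exact hi (hcoord j)
  rw [← sub_pos, inner_map_self_sub_eq_sum b hT hb]
  refine Finset.sum_pos' (fun i' _ => ?_) ⟨i, Finset.mem_univ i, ?_⟩
  · by_cases hi' : i' ∈ Set.range f
    · obtain ⟨j, rfl⟩ := hi'
      simp [hcoord j]
    · exact mul_nonneg (sub_nonneg.2 (hhigh i' hi').le) (sq_nonneg _)
  · exact mul_pos (sub_pos.2 (hhigh i hif)) (by positivity)

noncomputable def sublevelHomotopyEquivSphereOfEigenbasis [Fintype κ] (hT : T.IsSymmetric)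
    (hb : ∀ i, T (b i) = lam i • b i) (hf : Function.Injective f) {c : ℝ}
    (hlow : ∀ j, lam (f j) ≤ c) (hhigh : ∀ i ∉ Set.range f, c < lam i) :
    ContinuousMap.HomotopyEquiv {x : E // ‖x‖ = 1 ∧ ⟪x, T x⟫ ≤ c}
      (Metric.sphere (0 : EuclideanSpace ℝ κ) 1) :=
  have : FiniteDimensional ℝ E := b.toBasis.finiteDimensional_of_finite
  let V := Submodule.span ℝ (Set.range (b ∘ f))
  have hrank : Module.finrank ℝ V = Fintype.card κ :=
    finrank_span_eq_card (b.orthonormal.linearIndependent.comp f hf)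
  let L : V ≃ₗᵢ[ℝ] EuclideanSpace ℝ κ :=
    ((stdOrthonormalBasis ℝ V).reindex (Fintype.equivFinOfCardEq hrank.symm).symm).repr
  (sublevelHomotopyEquivSphere hT (fun _ => map_mem_span_eigenvectors hb)
    (fun _ => inner_map_self_le_of_mem_span b hT hb hlow)
    (fun _ hw => lt_inner_map_self_of_mem_orthogonal_span b hT hb hhigh hw)).trans
    L.unitSphereHomeomorph.toHomotopyEquiv

end Eigenbasis

/-- For `λ_k < c < λ_{k+1}` (1-indexed; here `lam ⟨k-1⟩ < c < lam ⟨k⟩` with the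
0-indexed eigenvalue sequence), the sublevel set `{x : ‖x‖ = 1 ∧ ⟪x, M x⟫ ≤ c}`
is homotopy equivalent to the unit sphere `S^{k-1} ⊆ ℝ^k`. -/
theorem sublevel_homotopy_equiv_sphere (n : ℕ)
    (M : EuclideanSpace ℝ (Fin n) →ₗ[ℝ] EuclideanSpace ℝ (Fin n))
    (hM : ∀ x y : EuclideanSpace ℝ (Fin n), ⟪M x, y⟫ = ⟪x, M y⟫)
    (lam : Fin n → ℝ) (hlam : StrictMono lam)
    (e : Fin n → EuclideanSpace ℝ (Fin n)) (he : Orthonormal ℝ e)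
    (heig : ∀ i, M (e i) = lam i • e i)
    (k : ℕ) (hk1 : 1 ≤ k) (hk2 : k ≤ n - 1)
    (c : ℝ) (hc1 : lam ⟨k - 1, by omega⟩ < c) (hc2 : c < lam ⟨k, by omega⟩) :
    Nonempty (ContinuousMap.HomotopyEquiv
      {x : EuclideanSpace ℝ (Fin n) // ‖x‖ = 1 ∧ ⟪x, M x⟫ ≤ c}
      (Metric.sphere (0 : EuclideanSpace ℝ (Fin k)) 1)) := by
  let b : OrthonormalBasis (Fin n) ℝ (EuclideanSpace ℝ (Fin n)) :=
    .mk he (he.linearIndependent.span_eq_top_of_card_eq_finrank' (by simp)).ge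
  have hb : ∀ i, M (b i) = lam i • b i := by simpa [b] using heig
  have hlow : ∀ j : Fin k, lam (Fin.castLE (by omega) j) ≤ c := fun j =>
    (hlam.monotone (Fin.le_def.2 (Nat.le_sub_one_of_lt j.2))).trans hc1.le
  have hhigh : ∀ i ∉ Set.range (Fin.castLE (by omega : k ≤ n)), c < lam i := by
    intro i hi
    have hki : k ≤ i := by
      by_contra! h
      exact hi ⟨⟨i, h⟩, rfl⟩
    exact hc2.trans_le (hlam.monotone (Fin.le_def.2 hki))
  exact ⟨sublevelHomotopyEquivSphereOfEigenbasis b hM hb (Fin.castLE_injective _) hlow hhigh⟩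
end

section
/- Let n ≥ 2 and let M be a symmetric linear endomorphism of the Euclidean space ℝⁿ with eigenvalues λ_1 < ⋯ < λ_n and orthonormal eigenvectors e_1, …, e_n. If λ_1 < c < λ_2, then the sublevel set {x : ‖x‖ = 1 ∧ ⟪x, M x⟫ ≤ c} has exactly two path-connected components, one containing e_1 and the other containing −e_1. -/
/-!
If the `e₁`-coordinate of a unit vector `x` vanishes, then `⟪x, M x⟫ ≥ λ₂ > c`; so on the sublevel
set the continuous function `x ↦ ⟪e₁, x⟫` never vanishes, and `e₁`, `-e₁` lie in different path
components by the intermediate value theorem. Conversely, if `⟪e₁, x⟫ > 0`, then at each point `y`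
of the segment from `x` to `e₁` the quantity `⟪y, M y⟫ - c ‖y‖²` is a nonnegative combination of
`⟪x, M x⟫ - c`, `(λ₁ - c) ⟪e₁, x⟫` and `λ₁ - c`, hence `≤ 0`, while `⟪e₁, y⟫ > 0` keeps the segment
away from `0`; normalizing it gives a path from `x` to `e₁` inside the sublevel set.
-/

open RealInnerProductSpace

section Topology

variable {X : Type*} [TopologicalSpace X] {F : Set X} {x y : X}

theorem disjoint_pathComponentIn_of_pos_of_neg {φ : X → ℝ} (hφ : Continuous φ)
    (hF : ∀ z ∈ F, φ z ≠ 0) (hx : 0 < φ x) (hy : φ y < 0) :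
    Disjoint (pathComponentIn F x) (pathComponentIn F y) := by
  refine Set.disjoint_left.2 fun z hxz hyz => ?_
  obtain ⟨γ, hγF⟩ := JoinedIn.trans hxz (JoinedIn.symm hyz)
  obtain ⟨_, ⟨t, rfl⟩, ht⟩ := (isPreconnected_range γ.continuous).intermediate_value
    (Set.mem_range_self 1) (Set.mem_range_self 0) hφ.continuousOn
    (show (0 : ℝ) ∈ Set.Icc (φ (γ 1)) (φ (γ 0)) by
      simp only [Path.source, Path.target]; exact ⟨hy.le, hx.le⟩)
  exact hF _ (hγF t) ht

end Topology

variable {E : Type*} [NormedAddCommGroup E] [InnerProductSpace ℝ E]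
  {M : E →ₗ[ℝ] E} {c μ : ℝ} {v x : E}

def sphereSublevel (M : E →ₗ[ℝ] E) (c : ℝ) : Set E := {x | ‖x‖ = 1 ∧ ⟪x, M x⟫ ≤ c}

theorem mem_sphereSublevel_of_eigenvector (hv : ‖v‖ = 1) (hMv : M v = μ • v) (hμ : μ ≤ c) :
    v ∈ sphereSublevel M c := by
  refine ⟨hv, ?_⟩
  rwa [hMv, real_inner_smul_right, real_inner_self_eq_norm_sq, hv, one_pow, mul_one]

theorem smul_inv_norm_mem_sphereSublevel {y : E} (hy : y ≠ 0) (h : ⟪y, M y⟫ ≤ c * ‖y‖ ^ 2) :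
    ‖y‖⁻¹ • y ∈ sphereSublevel M c := by
  have hy' : 0 < ‖y‖ := norm_pos_iff.2 hy
  refine ⟨by rw [norm_smul, norm_inv, norm_norm, inv_mul_cancel₀ hy'.ne'], ?_⟩
  rw [map_smul, real_inner_smul_left, real_inner_smul_right, ← mul_assoc, ← sq]
  calc (‖y‖⁻¹) ^ 2 * ⟪y, M y⟫ ≤ (‖y‖⁻¹) ^ 2 * (c * ‖y‖ ^ 2) := by gcongr
    _ = c := by field_simp

theorem inner_map_self_smul_add_smul_le (hM : M.IsSymmetric) (hMv : M v = μ • v) (hμ : μ ≤ c)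
    (hx : ⟪x, M x⟫ ≤ c * ‖x‖ ^ 2) (hvx : 0 ≤ ⟪v, x⟫) {a b : ℝ} (ha : 0 ≤ a) (hb : 0 ≤ b) :
    ⟪a • x + b • v, M (a • x + b • v)⟫ ≤ c * ‖a • x + b • v‖ ^ 2 := by
  have hxMv : ⟪x, M v⟫ = μ * ⟪v, x⟫ := by rw [hMv, real_inner_smul_right, real_inner_comm]
  have hvMx : ⟪v, M x⟫ = μ * ⟪v, x⟫ := by rw [← hM, hMv, real_inner_smul_left]
  have hvMv : ⟪v, M v⟫ = μ * ‖v‖ ^ 2 := by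
    rw [hMv, real_inner_smul_right, real_inner_self_eq_norm_sq]
  rw [← real_inner_self_eq_norm_sq]
  simp only [map_add, map_smul, inner_add_left, inner_add_right, real_inner_smul_left,
    real_inner_smul_right, hxMv, hvMx, hvMv, real_inner_comm v x]
  rw [real_inner_self_eq_norm_sq, real_inner_self_eq_norm_sq]
  nlinarith [mul_nonneg (mul_nonneg ha hb) (mul_nonneg (sub_nonneg.2 hμ) hvx),
    mul_nonneg (mul_nonneg hb hb) (mul_nonneg (sub_nonneg.2 hμ) (sq_nonneg ‖v‖)),
    mul_nonneg (mul_nonneg ha ha) (sub_nonneg.2 hx)]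

theorem joinedIn_sphereSublevel_of_inner_pos (hM : M.IsSymmetric) (hv : ‖v‖ = 1)
    (hMv : M v = μ • v) (hμ : μ ≤ c) (hx : x ∈ sphereSublevel M c) (hvx : 0 < ⟪v, x⟫) :
    JoinedIn (sphereSublevel M c) x v := by
  set L : ℝ → E := fun t => (1 - t) • x + t • v
  have hL_inner : ∀ t ∈ unitInterval, 0 < ⟪v, L t⟫ := by
    rintro t ⟨ht0, ht1⟩
    have : ⟪v, L t⟫ = (1 - t) * ⟪v, x⟫ + t := by
      simp only [L, inner_add_right, real_inner_smul_right, real_inner_self_eq_norm_sq, hv]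
      ring
    rw [this]
    rcases ht1.eq_or_lt with rfl | ht1
    · norm_num
    · nlinarith
  have hL_ne : ∀ t ∈ unitInterval, L t ≠ 0 := fun t ht h0 => by
    simpa [h0] using hL_inner t ht
  refine JoinedIn.ofLine (f := fun t => ‖L t‖⁻¹ • L t) ?_ (by simp [L, hx.1]) (by simp [L, hv])
    ?_
  · have hLc : Continuous L := by fun_prop
    exact (hLc.norm.continuousOn.inv₀ fun t ht => norm_ne_zero_iff.2 (hL_ne t ht)).smul
      hLc.continuousOn
  · rintro _ ⟨t, ht, rfl⟩
    refine smul_inv_norm_mem_sphereSublevel (hL_ne t ht) ?_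
    have hx' : ⟪x, M x⟫ ≤ c * ‖x‖ ^ 2 := by rw [hx.1]; simpa using hx.2
    exact inner_map_self_smul_add_smul_le hM hMv hμ hx' hvx.le (sub_nonneg.2 ht.2) ht.1

section Spectral

variable {ι : Type*} [Fintype ι] {lam : ι → ℝ} (b : OrthonormalBasis ι ℝ E)

theorem inner_map_self_eq_sum_eigenvalue_mul_sq (hM : M.IsSymmetric)
    (hb : ∀ i, M (b i) = lam i • b i) (x : E) :
    ⟪x, M x⟫ = ∑ i, lam i * ⟪b i, x⟫ ^ 2 := by
  rw [← b.sum_inner_mul_inner]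
  refine Finset.sum_congr rfl fun i _ => ?_
  rw [← hM, hb, real_inner_smul_left, real_inner_comm x]
  ring

theorem mul_norm_sq_le_inner_map_self_of_inner_eq_zero (hM : M.IsSymmetric)
    (hb : ∀ i, M (b i) = lam i • b i) {i₀ : ι} (hμ : ∀ i ≠ i₀, μ ≤ lam i)
    (hx : ⟪b i₀, x⟫ = 0) : μ * ‖x‖ ^ 2 ≤ ⟪x, M x⟫ := by
  rw [← b.sum_sq_inner_right, Finset.mul_sum, inner_map_self_eq_sum_eigenvalue_mul_sq b hM hb]
  refine Finset.sum_le_sum fun i _ => ?_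
  rcases eq_or_ne i i₀ with rfl | hi
  · simp [hx]
  · exact mul_le_mul_of_nonneg_right (hμ i hi) (sq_nonneg _)

theorem inner_ne_zero_of_mem_sphereSublevel (hM : M.IsSymmetric)
    (hb : ∀ i, M (b i) = lam i • b i) {i₀ : ι} (hμ : ∀ i ≠ i₀, μ ≤ lam i) (hc : c < μ)
    (hx : x ∈ sphereSublevel M c) : ⟪b i₀, x⟫ ≠ 0 := fun h0 => by
  have := mul_norm_sq_le_inner_map_self_of_inner_eq_zero b hM hb hμ h0
  rw [hx.1] at this
  linarith [hx.2]

theorem pathComponentIn_union_pathComponentIn_eq_sphereSublevel (hM : M.IsSymmetric)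
    (hb : ∀ i, M (b i) = lam i • b i) {i₀ : ι} (hc₀ : lam i₀ ≤ c) (hμ : ∀ i ≠ i₀, μ ≤ lam i)
    (hc : c < μ) :
    pathComponentIn (sphereSublevel M c) (b i₀) ∪ pathComponentIn (sphereSublevel M c) (-b i₀)
      = sphereSublevel M c := by
  refine (Set.union_subset pathComponentIn_subset pathComponentIn_subset).antisymm
    fun x hx => ?_
  have hb₀ : ‖b i₀‖ = 1 := b.orthonormal.1 i₀
  rcases (inner_ne_zero_of_mem_sphereSublevel b hM hb hμ hc hx).lt_or_gt with hneg | hpos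
  · refine Or.inr (joinedIn_sphereSublevel_of_inner_pos hM (by rwa [norm_neg]) ?_ hc₀ hx
      (by rwa [inner_neg_left, neg_pos])).symm
    rw [map_neg, hb, smul_neg]
  · exact Or.inl (joinedIn_sphereSublevel_of_inner_pos hM hb₀ (hb i₀) hc₀ hx hpos).symm

theorem disjoint_pathComponentIn_sphereSublevel (hM : M.IsSymmetric)
    (hb : ∀ i, M (b i) = lam i • b i) {i₀ : ι} (hμ : ∀ i ≠ i₀, μ ≤ lam i) (hc : c < μ) :
    Disjoint (pathComponentIn (sphereSublevel M c) (b i₀))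
      (pathComponentIn (sphereSublevel M c) (-b i₀)) := by
  refine disjoint_pathComponentIn_of_pos_of_neg (φ := fun y => ⟪b i₀, y⟫) (by fun_prop)
    (fun y hy => inner_ne_zero_of_mem_sphereSublevel b hM hb hμ hc hy) ?_ ?_
  all_goals simp

end Spectral

/-- If `λ_1 < c < λ_2` (1-indexed; 0-indexed `lam 0 < c < lam 1`), the sublevel set
`{x : ‖x‖ = 1 ∧ ⟪x, M x⟫ ≤ c}` has exactly two path-connected components, one
containing `e 0` and the other containing `-e 0`. -/
theorem sublevel_two_path_components (n : ℕ) (hn : 2 ≤ n)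
    (M : EuclideanSpace ℝ (Fin n) →ₗ[ℝ] EuclideanSpace ℝ (Fin n))
    (hM : ∀ x y : EuclideanSpace ℝ (Fin n), ⟪M x, y⟫ = ⟪x, M y⟫)
    (lam : Fin n → ℝ) (hlam : StrictMono lam)
    (e : Fin n → EuclideanSpace ℝ (Fin n)) (he : Orthonormal ℝ e)
    (heig : ∀ i, M (e i) = lam i • e i)
    (c : ℝ) (hc1 : lam ⟨0, by omega⟩ < c) (hc2 : c < lam ⟨1, by omega⟩) :
    e ⟨0, by omega⟩ ∈ {x : EuclideanSpace ℝ (Fin n) | ‖x‖ = 1 ∧ ⟪x, M x⟫ ≤ c}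
      ∧ -e ⟨0, by omega⟩ ∈ {x : EuclideanSpace ℝ (Fin n) | ‖x‖ = 1 ∧ ⟪x, M x⟫ ≤ c}
      ∧ pathComponentIn
            {x : EuclideanSpace ℝ (Fin n) | ‖x‖ = 1 ∧ ⟪x, M x⟫ ≤ c} (e ⟨0, by omega⟩)
          ∪ pathComponentIn
            {x : EuclideanSpace ℝ (Fin n) | ‖x‖ = 1 ∧ ⟪x, M x⟫ ≤ c} (-e ⟨0, by omega⟩)
        = {x : EuclideanSpace ℝ (Fin n) | ‖x‖ = 1 ∧ ⟪x, M x⟫ ≤ c}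
      ∧ Disjoint
          (pathComponentIn
            {x : EuclideanSpace ℝ (Fin n) | ‖x‖ = 1 ∧ ⟪x, M x⟫ ≤ c} (e ⟨0, by omega⟩))
          (pathComponentIn
            {x : EuclideanSpace ℝ (Fin n) | ‖x‖ = 1 ∧ ⟪x, M x⟫ ≤ c} (-e ⟨0, by omega⟩)) := by
  obtain ⟨b, rfl⟩ : ∃ b : OrthonormalBasis (Fin n) ℝ (EuclideanSpace ℝ (Fin n)), ⇑b = e :=
    ⟨.mk he (he.linearIndependent.span_eq_top_of_card_eq_finrank' (by simp)).ge,
      OrthonormalBasis.coe_mk _ _⟩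
  have hgap : ∀ i ≠ ⟨0, by omega⟩, lam ⟨1, by omega⟩ ≤ lam i := fun i hi =>
    hlam.monotone (Fin.mk_le_of_le_val (Nat.one_le_iff_ne_zero.2 fun h => hi (Fin.ext h)))
  have hb₀ : ‖b ⟨0, by omega⟩‖ = 1 := b.orthonormal.1 _
  refine ⟨mem_sphereSublevel_of_eigenvector hb₀ (heig _) hc1.le,
    mem_sphereSublevel_of_eigenvector (by rwa [norm_neg]) ?_ hc1.le,
    pathComponentIn_union_pathComponentIn_eq_sphereSublevel b hM heig hc1.le hgap hc2,
    disjoint_pathComponentIn_sphereSublevel b hM heig hgap hc2⟩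
  rw [map_neg, heig, smul_neg]
end

section
/- Let a < b be real numbers and let ρ : ℝ → ℝ be continuous on [a, b] with ρ(λ) > 0 for all λ ∈ [a, b] and ∫_a^b ρ(λ) dλ = 1. Let F(x) = ∫_a^x ρ(λ) dλ, and for each integer n ≥ 2 and each 0 ≤ k ≤ n let γ_{n,k} ∈ [a, b] be the unique point with F(γ_{n,k}) = k/n (such points exist and are unique since F is a strictly increasing continuous bijection from [a, b] onto [0, 1]). Define the normalized spacings p_{n,k} = (γ_{n,k+1} − γ_{n,k})/(b − a) for 0 ≤ k ≤ n − 1 and the entropy H_n = −∑_{k=0}^{n−1} p_{n,k} log p_{n,k}. Then H_n − log(n(b − a)) converges, as n → ∞, to (b − a)⁻¹ ∫_a^b log(ρ(λ)) dλ. -/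
/-!
Write `Δₖ = γ n (k+1) - γ n k`. Since `ρ` has mass `1/n` on `[γ n k, γ n (k+1)]`, the mean value
theorem for integrals gives `ξₖ` there with `ρ ξₖ = 1 / (n Δₖ)`, so that
`H n - log (n (b - a)) = (b - a)⁻¹ ∑ₖ Δₖ log (ρ ξₖ)`. This is a Riemann sum of the continuous
function `log ∘ ρ`, and its mesh is at most `1 / (n min ρ)`, so it converges to `∫ log ρ`.
-/

open MeasureTheory Filter Set Finset intervalIntegral Topology

theorem abs_mul_sub_intervalIntegral_le {f : ℝ → ℝ} {s t c ε : ℝ} (hst : s ≤ t)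
    (hf : IntervalIntegrable f volume s t) (hc : ∀ u ∈ Icc s t, |f u - c| ≤ ε) :
    |(t - s) * c - ∫ u in s..t, f u| ≤ ε * (t - s) := by
  have hsub : ∫ u in s..t, (f u - c) = (∫ u in s..t, f u) - (t - s) * c := by
    simp [integral_sub hf intervalIntegrable_const, mul_comm]
  have hbound : ‖∫ u in s..t, (f u - c)‖ ≤ ε * |t - s| :=
    norm_integral_le_of_norm_le_const fun u hu =>
      hc u (Ioc_subset_Icc_self (uIoc_of_le hst ▸ hu))
  rwa [hsub, Real.norm_eq_abs, abs_sub_comm, abs_of_nonneg (sub_nonneg.2 hst)] at hbound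

theorem abs_sum_mul_sub_intervalIntegral_le {f : ℝ → ℝ} {x y : ℕ → ℝ} {N : ℕ} {ε : ℝ}
    (hx : ∀ k < N, x k ≤ x (k + 1))
    (hf : ∀ k < N, IntervalIntegrable f volume (x k) (x (k + 1)))
    (hy : ∀ k < N, ∀ u ∈ Icc (x k) (x (k + 1)), |f u - y k| ≤ ε) :
    |∑ k ∈ range N, (x (k + 1) - x k) * y k - ∫ u in x 0..x N, f u| ≤ ε * (x N - x 0) := by
  rw [← sum_integral_adjacent_intervals hf, ← sum_sub_distrib]
  calc _ ≤ ∑ k ∈ range N, |(x (k + 1) - x k) * y k - ∫ u in x k..x (k + 1), f u| :=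
        abs_sum_le_sum_abs _ _
    _ ≤ ∑ k ∈ range N, ε * (x (k + 1) - x k) := by
        refine sum_le_sum fun k hk => ?_
        rw [Finset.mem_range] at hk
        exact abs_mul_sub_intervalIntegral_le (hx k hk) (hf k hk) (hy k hk)
    _ = ε * (x N - x 0) := by rw [← mul_sum, sum_range_sub]

theorem tendsto_riemannSum_intervalIntegral {ι : Type*} {l : Filter ι} {f : ℝ → ℝ} {a b : ℝ}
    (hf : ContinuousOn f (Icc a b)) {N : ι → ℕ} {x y : ι → ℕ → ℝ}
    (hpart : ∀ᶠ i in l, x i 0 = a ∧ x i (N i) = b ∧ ∀ k ≤ N i, x i k ∈ Icc a b)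
    (htag : ∀ᶠ i in l, ∀ k < N i, ∃ ξ ∈ Icc (x i k) (x i (k + 1)), y i k = f ξ)
    (hmesh : ∀ δ > 0, ∀ᶠ i in l, ∀ k < N i, x i (k + 1) - x i k < δ) :
    Tendsto (fun i => ∑ k ∈ range (N i), (x i (k + 1) - x i k) * y i k) l
      (𝓝 (∫ u in a..b, f u)) := by
  rw [Metric.tendsto_nhds]
  intro ε hε
  set C := |b - a| + 1
  have hC : 0 < C := by positivity
  obtain ⟨δ, hδ, hfδ⟩ := Metric.uniformContinuousOn_iff.1
    (isCompact_Icc.uniformContinuousOn_of_continuous hf) (ε / C) (by positivity)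
  filter_upwards [hpart, htag, hmesh δ hδ] with i ⟨h0, hN, hmem⟩ htag hmesh
  have hpiece : ∀ k < N i, uIcc (x i k) (x i (k + 1)) ⊆ Icc a b := fun k hk =>
    uIcc_subset_Icc (hmem k hk.le) (hmem (k + 1) hk)
  have hsum := abs_sum_mul_sub_intervalIntegral_le (f := f) (x := x i) (y := y i) (ε := ε / C)
    (fun k hk => by obtain ⟨ξ, hξ, -⟩ := htag k hk; exact hξ.1.trans hξ.2)
    (fun k hk => (hf.mono (hpiece k hk)).intervalIntegrable)
    (fun k hk u hu => by
      obtain ⟨ξ, hξ, hyξ⟩ := htag k hk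
      rw [hyξ]
      have hdist : dist u ξ < δ := by
        rw [Real.dist_eq, abs_sub_lt_iff]
        constructor <;> linarith [hu.1, hu.2, hξ.1, hξ.2, hmesh k hk]
      exact (hfδ u (hpiece k hk (Icc_subset_uIcc hu)) ξ (hpiece k hk (Icc_subset_uIcc hξ))
        hdist).le)
  rw [h0, hN] at hsum
  calc dist _ _ ≤ ε / C * (b - a) := by rwa [Real.dist_eq]
    _ < ε / C * C := by gcongr; linarith [le_abs_self (b - a)]
    _ = ε := div_mul_cancel₀ ε hC.ne'

theorem exists_intervalIntegral_eq_mul_sub {ρ : ℝ → ℝ} {s t : ℝ} (hρ : ContinuousOn ρ (uIcc s t)) :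
    ∃ ξ ∈ uIcc s t, ∫ u in s..t, ρ u = ρ ξ * (t - s) := by
  obtain ⟨ξ, hξ, h⟩ := exists_eq_const_mul_intervalIntegral_of_nonneg (g := fun _ => (1 : ℝ))
    (μ := volume) hρ intervalIntegrable_const (fun _ _ => zero_le_one)
  exact ⟨ξ, hξ, by simpa using h⟩

theorem neg_sum_mul_log_div_sub_log_mul {ι : Type*} (s : Finset ι) {Δ : ι → ℝ} {c : ℝ}
    (hΔ : ∀ k ∈ s, 0 < Δ k) (hc : 0 < c) :
    -∑ k ∈ s, Δ k / (∑ j ∈ s, Δ j) * Real.log (Δ k / ∑ j ∈ s, Δ j) - Real.log (c * ∑ j ∈ s, Δ j)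
      = (∑ j ∈ s, Δ j)⁻¹ * ∑ k ∈ s, Δ k * -Real.log (c * Δ k) := by
  rcases s.eq_empty_or_nonempty with rfl | hs
  · simp
  set L := ∑ j ∈ s, Δ j
  have hL : 0 < L := sum_pos hΔ hs
  have hlog : ∀ k ∈ s, Real.log (c * Δ k) = Real.log (Δ k / L) + Real.log (c * L) := by
    intro k hk
    rw [← Real.log_mul (div_pos (hΔ k hk) hL).ne' (by positivity)]
    congr 1
    field_simp
  have hsum : ∑ k ∈ s, Δ k / L = 1 := by rw [← sum_div, div_self hL.ne']
  symm
  calc _ = ∑ k ∈ s, Δ k / L * -(Real.log (Δ k / L) + Real.log (c * L)) := by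
        rw [mul_sum]
        refine sum_congr rfl fun k hk => ?_
        rw [hlog k hk]
        ring
    _ = _ := by
        simp only [mul_neg, mul_add, sum_neg_distrib, sum_add_distrib, ← sum_mul, hsum]
        ring

section PositiveDensity

variable {ρ : ℝ → ℝ} {a b x y : ℝ}

theorem eq_of_intervalIntegral_eq_zero (hcont : ContinuousOn ρ (Icc a b))
    (hpos : ∀ u ∈ Icc a b, 0 < ρ u) (hx : x ∈ Icc a b) (hy : y ∈ Icc a b)
    (h : ∫ u in x..y, ρ u = 0) : x = y := by
  obtain ⟨ξ, hξ, hmean⟩ := exists_intervalIntegral_eq_mul_sub (hcont.mono (uIcc_subset_Icc hx hy))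
  have hρξ : ρ ξ ≠ 0 := (hpos ξ (uIcc_subset_Icc hx hy hξ)).ne'
  have := (mul_eq_zero.1 (hmean ▸ h)).resolve_left hρξ
  linarith

theorem lt_and_exists_mul_sub_eq_intervalIntegral (hcont : ContinuousOn ρ (Icc a b))
    (hpos : ∀ u ∈ Icc a b, 0 < ρ u) (hx : x ∈ Icc a b) (hy : y ∈ Icc a b)
    (h : 0 < ∫ u in x..y, ρ u) : x < y ∧ ∃ ξ ∈ Icc x y, ρ ξ * (y - x) = ∫ u in x..y, ρ u := by
  obtain ⟨ξ, hξ, hmean⟩ := exists_intervalIntegral_eq_mul_sub (hcont.mono (uIcc_subset_Icc hx hy))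
  have hxy : x < y :=
    sub_pos.1 (pos_of_mul_pos_right (hmean ▸ h) (hpos ξ (uIcc_subset_Icc hx hy hξ)).le)
  rw [uIcc_of_le hxy.le] at hξ
  exact ⟨hxy, ξ, hξ, hmean.symm⟩

theorem integral_interval_sub_left_of_continuousOn (hcont : ContinuousOn ρ (Icc a b))
    (hx : x ∈ Icc a b) (hy : y ∈ Icc a b) :
    (∫ u in a..y, ρ u) - ∫ u in a..x, ρ u = ∫ u in x..y, ρ u :=
  have ha : a ∈ Icc a b := left_mem_Icc.2 (hx.1.trans hx.2)
  integral_interval_sub_left (hcont.mono (uIcc_subset_Icc ha hy)).intervalIntegrable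
    (hcont.mono (uIcc_subset_Icc ha hx)).intervalIntegrable

section Quantile

variable {n : ℕ} {q : ℕ → ℝ}

theorem quantile_zero (hcont : ContinuousOn ρ (Icc a b)) (hpos : ∀ u ∈ Icc a b, 0 < ρ u)
    (hmem : ∀ k ≤ n, q k ∈ Icc a b) (hq : ∀ k ≤ n, ∫ u in a..q k, ρ u = k / n) : q 0 = a := by
  have h0 := hmem 0 n.zero_le
  refine (eq_of_intervalIntegral_eq_zero hcont hpos (left_mem_Icc.2 (h0.1.trans h0.2)) h0 ?_).symm
  simpa using hq 0 n.zero_le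

theorem quantile_self (hcont : ContinuousOn ρ (Icc a b)) (hpos : ∀ u ∈ Icc a b, 0 < ρ u)
    (hnorm : ∫ u in a..b, ρ u = 1) (hn : n ≠ 0) (hmem : ∀ k ≤ n, q k ∈ Icc a b)
    (hq : ∀ k ≤ n, ∫ u in a..q k, ρ u = k / n) : q n = b := by
  have hqn := hmem n le_rfl
  have hb : b ∈ Icc a b := right_mem_Icc.2 (hqn.1.trans hqn.2)
  refine eq_of_intervalIntegral_eq_zero hcont hpos hqn hb ?_
  rw [← integral_interval_sub_left_of_continuousOn hcont hqn hb, hnorm, hq n le_rfl,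
    div_self (Nat.cast_ne_zero.2 hn), sub_self]

theorem quantile_lt_succ_and_exists_mul_sub_eq (hcont : ContinuousOn ρ (Icc a b))
    (hpos : ∀ u ∈ Icc a b, 0 < ρ u) (hmem : ∀ k ≤ n, q k ∈ Icc a b)
    (hq : ∀ k ≤ n, ∫ u in a..q k, ρ u = k / n) {k : ℕ} (hk : k < n) :
    q k < q (k + 1) ∧ ∃ ξ ∈ Icc (q k) (q (k + 1)), ρ ξ * (q (k + 1) - q k) = 1 / n := by
  have hint : ∫ u in q k..q (k + 1), ρ u = 1 / n := by
    rw [← integral_interval_sub_left_of_continuousOn hcont (hmem k hk.le) (hmem (k + 1) hk),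
      hq k hk.le, hq (k + 1) hk]
    push_cast
    ring
  rw [← hint]
  exact lt_and_exists_mul_sub_eq_intervalIntegral hcont hpos (hmem k hk.le) (hmem (k + 1) hk)
    (by rw [hint]; exact one_div_pos.2 (Nat.cast_pos.2 (by omega)))

end Quantile

theorem tendsto_sum_quantile_spacing_mul_neg_log (hcont : ContinuousOn ρ (Icc a b))
    (hpos : ∀ u ∈ Icc a b, 0 < ρ u) (hnorm : ∫ u in a..b, ρ u = 1) {γ : ℕ → ℕ → ℝ}
    (hmem : ∀ᶠ n in atTop, ∀ k ≤ n, γ n k ∈ Icc a b)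
    (hq : ∀ᶠ n in atTop, ∀ k ≤ n, ∫ u in a..γ n k, ρ u = k / n) :
    Tendsto (fun n : ℕ => ∑ k ∈ range n,
      (γ n (k + 1) - γ n k) * -Real.log (n * (γ n (k + 1) - γ n k))) atTop
      (𝓝 (∫ u in a..b, Real.log (ρ u))) := by
  have hquant := (hmem.and hq).and (eventually_ne_atTop 0)
  obtain ⟨x₀, hx₀, hmin⟩ := isCompact_Icc.exists_isMinOn
    (let ⟨n, hn⟩ := hmem.exists; ⟨_, hn 0 n.zero_le⟩) hcont
  refine tendsto_riemannSum_intervalIntegral (N := id)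
    (Real.continuousOn_log.comp hcont fun u hu => (hpos u hu).ne') ?_ ?_ ?_
  · filter_upwards [hquant] with n ⟨⟨hmem, hq⟩, hn⟩
    exact ⟨quantile_zero hcont hpos hmem hq, quantile_self hcont hpos hnorm hn hmem hq, hmem⟩
  · filter_upwards [hquant] with n ⟨⟨hmem, hq⟩, hn⟩ k hk
    obtain ⟨-, ξ, hξ, hρξ⟩ := quantile_lt_succ_and_exists_mul_sub_eq hcont hpos hmem hq hk
    refine ⟨ξ, hξ, ?_⟩
    rw [← Real.log_inv]
    congr 1
    refine inv_eq_of_mul_eq_one_left ?_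
    rw [mul_left_comm, hρξ]
    field_simp
  · intro δ hδ
    -- every spacing is at most `1 / (n * min ρ)`
    have hlim : Tendsto (fun n : ℕ => 1 / (n : ℝ) / ρ x₀) atTop (𝓝 0) := by
      simpa using tendsto_one_div_atTop_nhds_zero_nat.div_const (ρ x₀)
    filter_upwards [hquant, hlim.eventually (gt_mem_nhds hδ)] with n ⟨⟨hmem, hq⟩, hn⟩ hnδ k hk
    obtain ⟨hlt, ξ, hξ, hρξ⟩ := quantile_lt_succ_and_exists_mul_sub_eq hcont hpos hmem hq hk
    have hξmem : ξ ∈ Icc a b := Icc_subset_Icc (hmem k hk.le).1 (hmem (k + 1) hk).2 hξ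
    refine lt_of_le_of_lt ?_ hnδ
    rw [le_div_iff₀ (hpos x₀ hx₀), ← hρξ, mul_comm]
    exact mul_le_mul_of_nonneg_right (hmin hξmem) (sub_nonneg.2 hlt.le)

end PositiveDensity

theorem entropy_of_quantile_spacings_general (a b : ℝ)
    (ρ : ℝ → ℝ)
    (hcont : ContinuousOn ρ (Set.Icc a b))
    (hpos : ∀ l ∈ Set.Icc a b, 0 < ρ l)
    (hnorm : ∫ l in a..b, ρ l = 1)
    (F : ℝ → ℝ) (hF : ∀ x, F x = ∫ l in a..x, ρ l)
    (γ : ℕ → ℕ → ℝ)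
    (hγmem : ∀ n, 2 ≤ n → ∀ k ≤ n, γ n k ∈ Set.Icc a b)
    (hγ : ∀ n, 2 ≤ n → ∀ k ≤ n, F (γ n k) = (k : ℝ) / n)
    (p : ℕ → ℕ → ℝ) (hp : ∀ n k, p n k = (γ n (k + 1) - γ n k) / (b - a))
    (H : ℕ → ℝ)
    (hH : ∀ n, H n = -∑ k ∈ Finset.range n, p n k * Real.log (p n k)) :
    Tendsto (fun n : ℕ => H n - Real.log (n * (b - a))) atTop
      (nhds ((b - a)⁻¹ * ∫ l in a..b, Real.log (ρ l))) := by
  have hmem : ∀ᶠ n in atTop, ∀ k ≤ n, γ n k ∈ Icc a b :=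
    eventually_atTop.2 ⟨2, hγmem⟩
  have hq : ∀ᶠ n in atTop, ∀ k ≤ n, ∫ u in a..γ n k, ρ u = k / n :=
    eventually_atTop.2 ⟨2, fun n hn k hk => (hF _).symm.trans (hγ n hn k hk)⟩
  refine ((tendsto_sum_quantile_spacing_mul_neg_log hcont hpos hnorm hmem hq).const_mul
    (b - a)⁻¹).congr' ?_
  filter_upwards [hmem, hq, eventually_ne_atTop 0] with n hmem hq hn
  have hsum : ∑ k ∈ range n, (γ n (k + 1) - γ n k) = b - a := by
    rw [sum_range_sub, quantile_zero hcont hpos hmem hq, quantile_self hcont hpos hnorm hn hmem hq]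
  have hentropy := neg_sum_mul_log_div_sub_log_mul (range n) (c := n)
    (fun k hk => sub_pos.2
      (quantile_lt_succ_and_exists_mul_sub_eq hcont hpos hmem hq (Finset.mem_range.1 hk)).1)
    (Nat.cast_pos.2 (Nat.pos_of_ne_zero hn))
  rw [hsum] at hentropy
  rw [hH]
  simp only [hp]
  exact hentropy.symm

/-- Let `ρ` be a continuous positive probability density on `[a, b]`, with CDF `F`,
and let `γ n k` be the `k/n`-quantile of `ρ` for `0 ≤ k ≤ n`. Let
`p n k = (γ n (k+1) - γ n k)/(b - a)` be the normalized quantile spacings and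
`H n = -∑_{k<n} p n k · log (p n k)` their Shannon entropy. Then
`H n - log (n (b - a)) → (b - a)⁻¹ ∫_a^b log (ρ λ) dλ` as `n → ∞`. -/
theorem entropy_of_quantile_spacings (a b : ℝ) (hab : a < b)
    (ρ : ℝ → ℝ)
    (hcont : ContinuousOn ρ (Set.Icc a b))
    (hpos : ∀ l ∈ Set.Icc a b, 0 < ρ l)
    (hnorm : ∫ l in a..b, ρ l = 1)
    (F : ℝ → ℝ) (hF : ∀ x, F x = ∫ l in a..x, ρ l)
    (γ : ℕ → ℕ → ℝ)
    (hγmem : ∀ n, 2 ≤ n → ∀ k ≤ n, γ n k ∈ Set.Icc a b)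
    (hγ : ∀ n, 2 ≤ n → ∀ k ≤ n, F (γ n k) = (k : ℝ) / n)
    (p : ℕ → ℕ → ℝ) (hp : ∀ n k, p n k = (γ n (k + 1) - γ n k) / (b - a))
    (H : ℕ → ℝ)
    (hH : ∀ n, H n = -∑ k ∈ Finset.range n, p n k * Real.log (p n k)) :
    Tendsto (fun n : ℕ => H n - Real.log (n * (b - a))) atTop
      (nhds ((b - a)⁻¹ * ∫ l in a..b, Real.log (ρ l))) :=
  entropy_of_quantile_spacings_general a b ρ hcont hpos hnorm F hF γ hγmem hγ p hp H hH
end
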